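/- arXiv:1111.1797 — 2 statements merged into one kernel-verified Lean document; each statement's English description precedes it below -/
import Mathlib

section
/- The median of the Binomial(n, p) distribution is either ⌊np⌋ or ⌈np⌉; in particular, for any integer s ≥ ⌈np⌉, the Binomial(n,p) CDF satisfies F^{B}_{n,p}(s) ≥ 1/2. -/
open MeasureTheory Real

noncomputable def binPMF (n : ℕ) (p : ℝ) (s : ℕ) : ℝ :=
  (n.choose s : ℝ) * p ^ s * (1 - p) ^ (n - s)

noncomputable def binCDF (n : ℕ) (p : ℝ) (s : ℤ) : ℝ :=
  ∑ k ∈ Finset.range (s + 1).toNat, binPMF n p k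

/-!
Write `F(p) = P(X ≤ c)` for `X ~ Bin(n, p)`. A telescoping sum of Bernstein derivatives gives
`F'(p) = -n B_{n-1,c}(p)`, so `F` is antitone in `p`, and `F(c/n) ≥ 1/2` amounts to
`∫₀^{c/n} K ≤ ∫_{c/n}^1 K` for `K(t) = t^c (1-t)^(n-1-c)`. Push both halves forward along
`φ(t) = t^c (1-t)^(n-c)`, which increases on `[0, c/n]` and decreases on `[c/n, 1]`: since
`K = |φ'| · t / |c - n t|`, each half becomes the integral over `(0, max φ)` of the weight
`t / |c - n t|` at the preimage on that side. At a common level `φ t = φ s`, `t < c/n < s`, the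
weights compare because `2n·ts ≤ c(t + s)`, which after `U = 1/t - 1`, `V = 1/s - 1` is the
statement that the ratio of arithmetic to logarithmic mean of `U, V` drops when both are shifted
by `1`. Hence `F(c) ≥ 1/2` whenever `np ≤ c`; the reflection `X ↦ n - X` gives
`P(X ≥ m) ≥ 1/2` whenever `m ≤ np`, and one of `⌊np⌋`, `⌈np⌉` is a median.
-/

open Set

theorem hasDerivAt_log_add_sub_log_sub {m u : ℝ} (hu : |u| < m) :
    HasDerivAt (fun u => log (m + u) - log (m - u)) (2 * m / (m ^ 2 - u ^ 2)) u := by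
  obtain ⟨h₁, h₂⟩ := abs_lt.mp hu
  have hp : 0 < m + u := by linarith
  have hm : 0 < m - u := by linarith
  have h := (((hasDerivAt_id u).const_add m).log hp.ne').sub
    (((hasDerivAt_id u).const_sub m).log hm.ne')
  rw [show 2 * m / (m ^ 2 - u ^ 2) = 1 / (m + u) - -1 / (m - u) by
    rw [show m ^ 2 - u ^ 2 = (m + u) * (m - u) by ring]; field_simp; ring]
  exact h

theorem add_two_mul_log_add_one_sub_le {x y : ℝ} (hy : 0 < y) (hyx : y < x) :
    (x + y + 2) * (log (x + 1) - log (y + 1)) ≤ (x + y) * (log x - log y) := by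
  set m := (x + y) / 2
  set d := (x - y) / 2
  have hd : 0 ≤ d := by simp only [d]; linarith
  have hdm : d < m := by simp only [d, m]; linarith
  -- `2 * g d` is the difference of the two sides, and `g 0 = 0`
  set g : ℝ → ℝ := fun u =>
    m * (log (m + u) - log (m - u)) - (m + 1) * (log (m + 1 + u) - log (m + 1 - u))
  have hg : ∀ u ∈ Icc 0 d, HasDerivAt g
      (m * (2 * m / (m ^ 2 - u ^ 2)) - (m + 1) * (2 * (m + 1) / ((m + 1) ^ 2 - u ^ 2))) u := by
    intro u hu
    have hum : |u| < m := by rw [abs_of_nonneg hu.1]; linarith [hu.2]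
    exact ((hasDerivAt_log_add_sub_log_sub hum).const_mul m).sub
      ((hasDerivAt_log_add_sub_log_sub (by linarith : |u| < m + 1)).const_mul (m + 1))
  have hmono : MonotoneOn g (Icc 0 d) := by
    refine monotoneOn_of_hasDerivWithinAt_nonneg (convex_Icc 0 d)
      (fun u hu => (hg u hu).continuousAt.continuousWithinAt)
      (fun u hu => (hg u (interior_subset hu)).hasDerivWithinAt) fun u hu => ?_
    rw [interior_Icc] at hu
    have h₁ : 0 < m ^ 2 - u ^ 2 := by nlinarith [hu.1, hu.2]
    have h₂ : 0 < (m + 1) ^ 2 - u ^ 2 := by nlinarith [hu.1, hu.2]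
    rw [sub_nonneg, mul_div_assoc', mul_div_assoc', div_le_div_iff₀ h₂ h₁]
    nlinarith [sq_nonneg u, mul_pos hu.1 hu.1, hu.1]
  have hgd := hmono (left_mem_Icc.2 hd) (right_mem_Icc.2 hd) hd
  simp only [g, add_zero, sub_zero, sub_self, mul_zero] at hgd
  rw [show m + d = x by ring, show m - d = y by ring, show m + 1 + d = x + 1 by ring,
    show m + 1 - d = y + 1 by ring] at hgd
  simp only [m] at hgd
  linarith

theorem two_mul_add_mul_mul_le_of_log_level {a b t s : ℝ} (ha : 0 < a) (ht : 0 < t)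
    (hts : t < s) (hs : s < 1)
    (hlev : a * log t + b * log (1 - t) = a * log s + b * log (1 - s)) :
    2 * (a + b) * (t * s) ≤ a * (t + s) := by
  have hs₀ : 0 < s := ht.trans hts
  have ht₁ : 0 < 1 - t := by linarith
  have hs₁ : 0 < 1 - s := by linarith
  set U := (1 - t) / t
  set V := (1 - s) / s
  have hV : 0 < V := by positivity
  have hVU : V < U := by simp only [U, V]; rw [div_lt_div_iff₀ hs₀ ht]; nlinarith
  have hU₁ : U + 1 = t⁻¹ := by simp only [U]; field_simp; ring
  have hV₁ : V + 1 = s⁻¹ := by simp only [V]; field_simp; ring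
  have hUV₁ : U + V = (t + s - 2 * (t * s)) / (t * s) := by simp only [U, V]; field_simp; ring
  have hlogU : log U = log (1 - t) - log t := log_div ht₁.ne' ht.ne'
  have hlogV : log V = log (1 - s) - log s := log_div hs₁.ne' hs₀.ne'
  clear_value U V
  have hshift := add_two_mul_log_add_one_sub_le hV hVU
  rw [hU₁, hV₁, log_inv, log_inv, hlogU, hlogV] at hshift
  have hgap : 0 < log (1 - t) - log (1 - s) := sub_pos.2 (log_lt_log hs₁ (by linarith))
  have hUV : 2 * b ≤ a * (U + V) := by
    refine le_of_mul_le_mul_right ?_ hgap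
    calc 2 * b * (log (1 - t) - log (1 - s)) = a * (2 * (log s - log t)) := by
          linear_combination 2 * hlev
      _ ≤ a * ((U + V) * (log (1 - t) - log (1 - s))) :=
          mul_le_mul_of_nonneg_left (by linear_combination hshift) ha.le
      _ = a * (U + V) * (log (1 - t) - log (1 - s)) := by ring
  rw [hUV₁, mul_div_assoc', le_div_iff₀ (by positivity)] at hUV
  linarith

theorem setIntegral_abs_deriv_mul_eq_integral_image_invFunOn {f f' : ℝ → ℝ} {s : Set ℝ}
    (hs : MeasurableSet s) (hf' : ∀ x ∈ s, HasDerivWithinAt f (f' x) s x) (hf : InjOn f s)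
    (w : ℝ → ℝ) :
    ∫ x in s, |f' x| * w x = ∫ y in f '' s, w (Function.invFunOn f s y) := by
  rw [integral_image_eq_integral_abs_deriv_smul hs hf' hf]
  refine setIntegral_congr_fun hs fun x hx => ?_
  simp only [smul_eq_mul, hf.leftInvOn_invFunOn hx]

theorem integrableOn_image_invFunOn_iff {f f' : ℝ → ℝ} {s : Set ℝ}
    (hs : MeasurableSet s) (hf' : ∀ x ∈ s, HasDerivWithinAt f (f' x) s x) (hf : InjOn f s)
    (w : ℝ → ℝ) :
    IntegrableOn (fun y => w (Function.invFunOn f s y)) (f '' s) ↔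
      IntegrableOn (fun x => |f' x| * w x) s := by
  rw [integrableOn_image_iff_integrableOn_abs_deriv_smul hs hf' hf]
  refine integrableOn_congr_fun (fun x hx => ?_) hs
  simp only [smul_eq_mul, hf.leftInvOn_invFunOn hx]

theorem setIntegral_abs_deriv_mul_le_of_image_eq {f f' w : ℝ → ℝ} {s t : Set ℝ}
    (hs : MeasurableSet s) (ht : MeasurableSet t)
    (hfs' : ∀ x ∈ s, HasDerivWithinAt f (f' x) s x)
    (hft' : ∀ x ∈ t, HasDerivWithinAt f (f' x) t x)
    (hfs : InjOn f s) (hft : InjOn f t) (himage : f '' s = f '' t)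
    (hints : IntegrableOn (fun x => |f' x| * w x) s)
    (hintt : IntegrableOn (fun x => |f' x| * w x) t)
    (hw : ∀ x ∈ s, ∀ y ∈ t, f x = f y → w x ≤ w y) :
    ∫ x in s, |f' x| * w x ≤ ∫ x in t, |f' x| * w x := by
  rw [setIntegral_abs_deriv_mul_eq_integral_image_invFunOn hs hfs' hfs,
    setIntegral_abs_deriv_mul_eq_integral_image_invFunOn ht hft' hft, himage]
  rw [← integrableOn_image_invFunOn_iff hs hfs' hfs, himage] at hints
  rw [← integrableOn_image_invFunOn_iff ht hft' hft] at hintt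
  refine setIntegral_mono_on hints hintt
    (measurable_image_of_fderivWithin ht (fun x hx => (hft' x hx).hasFDerivWithinAt) hft)
    fun y hy => ?_
  have hy' : y ∈ f '' s := himage ▸ hy
  refine hw _ (Function.invFunOn_mem hy') _ (Function.invFunOn_mem hy) ?_
  rw [Function.invFunOn_eq hy', Function.invFunOn_eq hy]

section BetaKernel

variable {n c : ℕ}

theorem hasDerivAt_pow_mul_one_sub_pow (hc : 0 < c) (hcn : c < n) (t : ℝ) :
    HasDerivAt (fun t : ℝ => t ^ c * (1 - t) ^ (n - c))
      (t ^ (c - 1) * (1 - t) ^ (n - c - 1) * (c - n * t)) t := by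
  have h := (hasDerivAt_pow c t).mul
    ((hasDerivAt_pow (n - c) (1 - t)).comp t ((hasDerivAt_id t).const_sub 1))
  refine h.congr_deriv ?_
  obtain ⟨a, rfl⟩ : ∃ a, c = a + 1 := ⟨c - 1, by omega⟩
  obtain ⟨b, hb⟩ : ∃ b, n - (a + 1) = b + 1 := ⟨n - (a + 1) - 1, by omega⟩
  have hn : (n : ℝ) = a + 1 + (b + 1) := by
    rw [show n = a + 1 + (b + 1) by omega]; push_cast; ring
  simp only [hb, hn, Function.comp_apply, add_tsub_cancel_right, pow_succ]
  push_cast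
  ring

theorem pow_mul_one_sub_pow_eq_abs_mul (hc : 0 < c) {t : ℝ} (ht₀ : 0 ≤ t) (ht₁ : t ≤ 1)
    (ht : (c : ℝ) - n * t ≠ 0) :
    t ^ c * (1 - t) ^ (n - 1 - c) =
      |t ^ (c - 1) * (1 - t) ^ (n - c - 1) * (c - n * t)| * (t / |c - n * t|) := by
  have h₁ : 0 ≤ 1 - t := by linarith
  rw [abs_mul, abs_of_nonneg (by positivity), mul_assoc, mul_div_cancel₀ _ (abs_ne_zero.2 ht),
    mul_right_comm, ← pow_succ, Nat.sub_add_cancel hc, Nat.sub_right_comm]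

theorem strictMonoOn_pow_mul_one_sub_pow (hc : 0 < c) (hcn : c < n) :
    StrictMonoOn (fun t : ℝ => t ^ c * (1 - t) ^ (n - c)) (Icc 0 (c / n)) := by
  have hn : (0 : ℝ) < n := by exact_mod_cast hc.trans hcn
  have hcn' : (c : ℝ) < n := by exact_mod_cast hcn
  refine strictMonoOn_of_hasDerivWithinAt_pos (convex_Icc _ _) (by fun_prop)
    (fun t _ => (hasDerivAt_pow_mul_one_sub_pow hc hcn t).hasDerivWithinAt) fun t ht => ?_
  rw [interior_Icc, mem_Ioo, lt_div_iff₀ hn] at ht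
  have : 0 < 1 - t := by nlinarith
  have : 0 < (c : ℝ) - n * t := by linarith
  have := ht.1
  positivity

theorem strictAntiOn_pow_mul_one_sub_pow (hc : 0 < c) (hcn : c < n) :
    StrictAntiOn (fun t : ℝ => t ^ c * (1 - t) ^ (n - c)) (Icc (c / n) 1) := by
  have hn : (0 : ℝ) < n := by exact_mod_cast hc.trans hcn
  have hc' : (0 : ℝ) < c := by exact_mod_cast hc
  refine strictAntiOn_of_hasDerivWithinAt_neg (convex_Icc _ _) (by fun_prop)
    (fun t _ => (hasDerivAt_pow_mul_one_sub_pow hc hcn t).hasDerivWithinAt) fun t ht => ?_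
  rw [interior_Icc, mem_Ioo, div_lt_iff₀ hn] at ht
  have : 0 < 1 - t := by linarith
  have : 0 < t := by nlinarith
  exact mul_neg_of_pos_of_neg (by positivity) (by linarith)

theorem div_abs_sub_le_of_pow_mul_one_sub_pow_eq (hc : 0 < c) (hcn : c < n) {x y : ℝ}
    (hx : x ∈ Ioo 0 (c / n : ℝ)) (hy : y ∈ Ioo (c / n : ℝ) 1)
    (hxy : x ^ c * (1 - x) ^ (n - c) = y ^ c * (1 - y) ^ (n - c)) :
    x / |c - n * x| ≤ y / |c - n * y| := by
  have hn : (0 : ℝ) < n := by exact_mod_cast hc.trans hcn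
  obtain ⟨hx₀, hxc⟩ := hx
  obtain ⟨hcy, hy₁⟩ := hy
  have hxy' : x < y := hxc.trans hcy
  have hy₀ : 0 < y := hx₀.trans hxy'
  rw [lt_div_iff₀ hn] at hxc
  rw [div_lt_iff₀ hn] at hcy
  have hlog : (c : ℝ) * log x + (n - c : ℕ) * log (1 - x) =
      c * log y + (n - c : ℕ) * log (1 - y) := by
    have := congrArg log hxy
    rwa [log_mul (by positivity) (pow_ne_zero _ (by linarith)),
      log_mul (by positivity) (pow_ne_zero _ (by linarith)),
      log_pow, log_pow, log_pow, log_pow] at this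
  have key := two_mul_add_mul_mul_le_of_log_level (by exact_mod_cast hc) hx₀ hxy' hy₁ hlog
  rw [Nat.cast_sub hcn.le, add_sub_cancel] at key
  rw [abs_of_pos (by linarith), abs_of_neg (by linarith), div_le_div_iff₀ (by linarith)
    (by linarith)]
  nlinarith

theorem integral_pow_mul_one_sub_pow_le (hc : 0 < c) (hcn : c < n) :
    ∫ t in (0 : ℝ)..c / n, t ^ c * (1 - t) ^ (n - 1 - c) ≤
      ∫ t in (c / n : ℝ)..1, t ^ c * (1 - t) ^ (n - 1 - c) := by
  have hn : (0 : ℝ) < n := by exact_mod_cast hc.trans hcn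
  have hp₀ : (0 : ℝ) < c / n := by positivity
  have hp₁ : (c / n : ℝ) < 1 := (div_lt_one hn).2 (by exact_mod_cast hcn)
  set p : ℝ := c / n
  set φ : ℝ → ℝ := fun t => t ^ c * (1 - t) ^ (n - c)
  set φ' : ℝ → ℝ := fun t => t ^ (c - 1) * (1 - t) ^ (n - c - 1) * (c - n * t)
  set w : ℝ → ℝ := fun t => t / |c - n * t|
  have hφ : ∀ t, HasDerivAt φ (φ' t) t := hasDerivAt_pow_mul_one_sub_pow hc hcn
  have hmono : StrictMonoOn φ (Icc 0 p) := strictMonoOn_pow_mul_one_sub_pow hc hcn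
  have hanti : StrictAntiOn φ (Icc p 1) := strictAntiOn_pow_mul_one_sub_pow hc hcn
  have himage : φ '' Ioo 0 p = φ '' Ioo p 1 := by
    have hφc : ContinuousOn φ (Icc 0 1) := by fun_prop
    rw [(hφc.mono (Icc_subset_Icc_right hp₁.le)).image_Ioo_of_strictMonoOn hp₀.le hmono,
      (hφc.mono (Icc_subset_Icc_left hp₀.le)).image_Ioo_of_strictAntiOn hp₁.le hanti]
    simp [φ, zero_pow hc.ne', zero_pow (Nat.sub_ne_zero_of_lt hcn)]
  have hK : ∀ {a b : ℝ}, 0 ≤ a → b ≤ 1 → (∀ t ∈ Ioo a b, t ≠ p) →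
      EqOn (fun t : ℝ => t ^ c * (1 - t) ^ (n - 1 - c)) (fun t => |φ' t| * w t) (Ioo a b) :=
    fun ha hb hne t ht => pow_mul_one_sub_pow_eq_abs_mul hc (ha.trans ht.1.le) (ht.2.le.trans hb)
      (sub_ne_zero.2 fun h => hne t ht ((eq_div_iff hn.ne').2 (by linarith)))
  have hK₁ := hK le_rfl hp₁.le fun t ht => ht.2.ne
  have hK₂ := hK hp₀.le le_rfl fun t ht => ht.1.ne'
  have hKint : ∀ a b : ℝ,
      IntegrableOn (fun t : ℝ => t ^ c * (1 - t) ^ (n - 1 - c)) (Ioo a b) :=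
    fun a b => (Continuous.integrableOn_Icc (by fun_prop)).mono_set Ioo_subset_Icc_self
  rw [intervalIntegral.integral_of_le hp₀.le, intervalIntegral.integral_of_le hp₁.le,
    integral_Ioc_eq_integral_Ioo, integral_Ioc_eq_integral_Ioo,
    setIntegral_congr_fun measurableSet_Ioo hK₁, setIntegral_congr_fun measurableSet_Ioo hK₂]
  exact setIntegral_abs_deriv_mul_le_of_image_eq measurableSet_Ioo measurableSet_Ioo
    (fun t _ => (hφ t).hasDerivWithinAt) (fun t _ => (hφ t).hasDerivWithinAt)
    (hmono.injOn.mono Ioo_subset_Icc_self) (hanti.injOn.mono Ioo_subset_Icc_self) himage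
    ((hKint 0 p).congr_fun hK₁ measurableSet_Ioo) ((hKint p 1).congr_fun hK₂ measurableSet_Ioo)
    fun x hx y hy => div_abs_sub_le_of_pow_mul_one_sub_pow_eq hc hcn hx hy

end BetaKernel

open Polynomial

theorem bernsteinPolynomial.derivative_sum_range {R : Type*} [CommRing R] (n c : ℕ) :
    derivative (∑ ν ∈ Finset.range (c + 1), bernsteinPolynomial R n ν) =
      -n * bernsteinPolynomial R (n - 1) c := by
  induction c with
  | zero => simp [bernsteinPolynomial.derivative_zero]
  | succ c ih =>
    rw [Finset.sum_range_succ, derivative_add, ih, bernsteinPolynomial.derivative_succ]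
    ring

theorem bernsteinPolynomial.eval_nonneg (n ν : ℕ) {t : ℝ} (ht : t ∈ Icc 0 1) :
    0 ≤ (bernsteinPolynomial ℝ n ν).eval t := by
  have : 0 ≤ 1 - t := by linarith [ht.2]
  have := ht.1
  simp only [bernsteinPolynomial, eval_mul, eval_pow, eval_sub, eval_one, eval_X, eval_natCast]
  positivity

theorem binCDF_natCast (n c : ℕ) (p : ℝ) :
    binCDF n p c = (∑ ν ∈ Finset.range (c + 1), bernsteinPolynomial ℝ n ν).eval p := by
  simp [binCDF, binPMF, bernsteinPolynomial, eval_finsetSum]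

theorem binCDF_of_neg (n : ℕ) (p : ℝ) {s : ℤ} (hs : s < 0) : binCDF n p s = 0 := by
  simp [binCDF, Int.toNat_eq_zero.2 (by omega : s + 1 ≤ 0)]

theorem binCDF_of_le {n c : ℕ} (h : n ≤ c) (p : ℝ) : binCDF n p c = 1 := by
  rw [binCDF_natCast,
    ← Finset.sum_subset (Finset.range_subset_range.2 (by omega : n + 1 ≤ c + 1)),
    bernsteinPolynomial.sum, eval_one]
  intro ν _ hν
  exact bernsteinPolynomial.eq_zero_of_lt ℝ (by simpa using hν)

theorem binCDF_zero_right (n c : ℕ) : binCDF n 0 c = 1 := by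
  simp [binCDF_natCast, eval_finsetSum, bernsteinPolynomial.eval_at_0]

theorem binCDF_one_right {n c : ℕ} (hcn : c < n) : binCDF n 1 c = 0 := by
  simp only [binCDF_natCast, eval_finsetSum, bernsteinPolynomial.eval_at_1]
  exact Finset.sum_eq_zero fun ν hν => if_neg (by simp at hν; omega)

theorem hasDerivAt_binCDF (n c : ℕ) (p : ℝ) :
    HasDerivAt (fun p => binCDF n p c) (-n * (bernsteinPolynomial ℝ (n - 1) c).eval p) p := by
  have h := Polynomial.hasDerivAt (∑ ν ∈ Finset.range (c + 1), bernsteinPolynomial ℝ n ν) p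
  rw [bernsteinPolynomial.derivative_sum_range] at h
  simp_rw [binCDF_natCast]
  simpa using h

theorem binCDF_antitoneOn (n c : ℕ) : AntitoneOn (fun p => binCDF n p c) (Icc 0 1) := by
  refine antitoneOn_of_hasDerivWithinAt_nonpos (convex_Icc 0 1)
    (fun p _ => (hasDerivAt_binCDF n c p).continuousAt.continuousWithinAt)
    (fun p _ => (hasDerivAt_binCDF n c p).hasDerivWithinAt) fun p hp => ?_
  have := bernsteinPolynomial.eval_nonneg (n - 1) c (interior_subset hp)
  rw [neg_mul, neg_nonpos]
  positivity

theorem binCDF_eq_one_sub_integral (n c : ℕ) (p : ℝ) :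
    binCDF n p c = 1 - n * ∫ t in (0 : ℝ)..p, (bernsteinPolynomial ℝ (n - 1) c).eval t := by
  have := intervalIntegral.integral_eq_sub_of_hasDerivAt (fun t _ => hasDerivAt_binCDF n c t)
    (Polynomial.continuous _ |>.const_mul _ |>.intervalIntegrable 0 p)
  rw [intervalIntegral.integral_const_mul, binCDF_zero_right] at this
  linarith

theorem half_le_binCDF_div {n c : ℕ} (hcn : c < n) : 1 / 2 ≤ binCDF n (c / n) c := by
  rcases Nat.eq_zero_or_pos c with rfl | hc
  · norm_num [show binCDF n 0 0 = 1 from binCDF_zero_right n 0]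
  have hB : ∀ t : ℝ, (bernsteinPolynomial ℝ (n - 1) c).eval t =
      ((n - 1).choose c : ℝ) * (t ^ c * (1 - t) ^ (n - 1 - c)) := fun t => by
    simp [bernsteinPolynomial, mul_assoc]
  have hint : ∀ a b : ℝ,
      IntervalIntegrable (fun t => (bernsteinPolynomial ℝ (n - 1) c).eval t) volume a b :=
    fun a b => (Polynomial.continuous _).intervalIntegrable a b
  have hsplit := intervalIntegral.integral_add_adjacent_intervals (hint 0 (c / n)) (hint _ 1)
  have htotal := binCDF_eq_one_sub_integral n c 1
  rw [binCDF_one_right hcn, ← hsplit] at htotal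
  have hle : ∫ t in (0 : ℝ)..c / n, (bernsteinPolynomial ℝ (n - 1) c).eval t ≤
      ∫ t in (c / n : ℝ)..1, (bernsteinPolynomial ℝ (n - 1) c).eval t := by
    simp only [hB, intervalIntegral.integral_const_mul]
    exact mul_le_mul_of_nonneg_left (integral_pow_mul_one_sub_pow_le hc hcn) (Nat.cast_nonneg _)
  have := mul_le_mul_of_nonneg_left hle (Nat.cast_nonneg (α := ℝ) n)
  rw [binCDF_eq_one_sub_integral]
  linarith

theorem half_le_binCDF {n c : ℕ} {p : ℝ} (hp : p ∈ Icc 0 1) (h : n * p ≤ c) :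
    1 / 2 ≤ binCDF n p c := by
  rcases le_or_gt n c with hnc | hcn
  · rw [binCDF_of_le hnc]; norm_num
  have hn : (0 : ℝ) < n := by exact_mod_cast (Nat.zero_le c).trans_lt hcn
  have hpc : p ≤ c / n := by rw [le_div_iff₀ hn]; linarith
  have hc1 : (c / n : ℝ) ≤ 1 := (div_le_one hn).2 (by exact_mod_cast hcn.le)
  exact (half_le_binCDF_div hcn).trans
    (binCDF_antitoneOn n c hp ⟨hp.1.trans hpc, hc1⟩ hpc)

theorem half_le_binCDF_of_mul_le {n : ℕ} {p : ℝ} (hp : p ∈ Icc 0 1) {s : ℤ}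
    (h : n * p ≤ s) :
    1 / 2 ≤ binCDF n p s := by
  lift s to ℕ using Int.cast_nonneg_iff.mp ((mul_nonneg n.cast_nonneg hp.1).trans h)
  exact half_le_binCDF hp (by exact_mod_cast h)

theorem binCDF_add_binCDF_one_sub {n c : ℕ} (hcn : c < n) (p : ℝ) :
    binCDF n p c + binCDF n (1 - p) (n - 1 - c : ℕ) = 1 := by
  have hflip : ∀ ν ∈ Finset.range (n - 1 - c + 1),
      (bernsteinPolynomial ℝ n ν).eval (1 - p) = (bernsteinPolynomial ℝ n (n - ν)).eval p :=
    fun ν hν => by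
      rw [← bernsteinPolynomial.flip ℝ n ν (by simp at hν; omega)]
      simp
  have hupper :
      ∑ ν ∈ Finset.range (n - 1 - c + 1), (bernsteinPolynomial ℝ n (n - ν)).eval p =
      ∑ ν ∈ Finset.Ico (c + 1) (n + 1), (bernsteinPolynomial ℝ n ν).eval p := by
    rw [Finset.sum_Ico_eq_sum_range, ← Finset.sum_range_reflect]
    refine Finset.sum_congr (by congr 1; omega) fun ν hν => ?_
    simp at hν
    congr 2
    omega
  rw [binCDF_natCast, binCDF_natCast, eval_finsetSum, eval_finsetSum, Finset.sum_congr rfl hflip,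
    hupper, Finset.sum_range_add_sum_Ico _ (by omega), ← eval_finsetSum,
    bernsteinPolynomial.sum, eval_one]

theorem binCDF_sub_one_le_half {n : ℕ} {p : ℝ} (hp : p ∈ Icc 0 1) {m : ℤ}
    (h : m ≤ n * p) :
    binCDF n p (m - 1) ≤ 1 / 2 := by
  rcases lt_or_ge (m - 1) 0 with hm | hm
  · rw [binCDF_of_neg n p hm]; norm_num
  lift m - 1 to ℕ using hm with c hc
  have hcn : c < n := by
    have : (m : ℝ) ≤ n := h.trans (mul_le_of_le_one_right n.cast_nonneg hp.2)
    have : m ≤ n := by exact_mod_cast this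
    omega
  have hq : 1 - p ∈ Icc (0 : ℝ) 1 := ⟨by linarith [hp.2], by linarith [hp.1]⟩
  have hmean : (n : ℝ) * (1 - p) ≤ (n - 1 - c : ℕ) := by
    have : (c : ℝ) + 1 = m := by exact_mod_cast (by omega : (c : ℤ) + 1 = m)
    rw [Nat.cast_sub (by omega), Nat.cast_sub (by omega)]
    push_cast
    linarith
  linarith [binCDF_add_binCDF_one_sub hcn p, half_le_binCDF hq hmean]

/-- The median of `Binomial(n,p)` is either `⌊np⌋` or `⌈np⌉`
(an integer `m` is a median iff `P(X ≤ m) ≥ 1/2` and `P(X ≥ m) ≥ 1/2`);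
in particular `F^B_{n,p}(s) ≥ 1/2` for every integer `s ≥ ⌈np⌉`. -/
theorem binomial_median (n : ℕ) (p : ℝ) (hp : p ∈ Set.Icc (0 : ℝ) 1) :
    (∃ m : ℤ, (m = ⌊(n : ℝ) * p⌋ ∨ m = ⌈(n : ℝ) * p⌉) ∧
      binCDF n p m ≥ 1 / 2 ∧ 1 - binCDF n p (m - 1) ≥ 1 / 2) ∧
    (∀ s : ℤ, ⌈(n : ℝ) * p⌉ ≤ s → binCDF n p s ≥ 1 / 2) := by
  have hceil : ∀ s : ℤ, ⌈(n : ℝ) * p⌉ ≤ s → 1 / 2 ≤ binCDF n p s := fun s hs =>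
    half_le_binCDF_of_mul_le hp ((Int.le_ceil _).trans (by exact_mod_cast hs))
  refine ⟨?_, hceil⟩
  by_cases h : binCDF n p (⌈(n : ℝ) * p⌉ - 1) ≤ 1 / 2
  · exact ⟨⌈(n : ℝ) * p⌉, Or.inr rfl, hceil _ le_rfl, by linarith⟩
  refine ⟨⌊(n : ℝ) * p⌋, Or.inl rfl, ?_, by
    linarith [binCDF_sub_one_le_half hp (Int.floor_le ((n : ℝ) * p))]⟩
  rcases (Int.floor_le_ceil ((n : ℝ) * p)).eq_or_lt with heq | hlt
  · exact heq ▸ hceil _ le_rfl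
  · have := Int.ceil_le_floor_add_one ((n : ℝ) * p)
    rw [show ⌊(n : ℝ) * p⌋ = ⌈(n : ℝ) * p⌉ - 1 by omega]
    linarith
end

section
/- Let 0 < y < μ₁ ≤ 1 with Δ' = μ₁ − y, and let T ≥ 1. For any integer j ≥ 4(ln T)/Δ'², let s(j) ~ Binomial(j, μ₁) and define X(j, s, y) as a geometric random variable (number of failures before first success) with success probability 1 − F^{beta}_{s+1, j−s+1}(y). Then E[min{E[X(j, s(j), y) | s(j)], T}] ≤ 16/T. -/
open MeasureTheory Real

noncomputable def betaPDF (a b : ℕ) (x : ℝ) : ℝ :=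
  if 0 < x ∧ x < 1 then
    (Real.Gamma (a + b) / (Real.Gamma a * Real.Gamma b)) * x ^ (a - 1) * (1 - x) ^ (b - 1)
  else 0

noncomputable def betaCDF (a b : ℕ) (y : ℝ) : ℝ :=
  ∫ x in Set.Iic y, betaPDF a b x

/-- Expected number of failures before the first success, where each trial succeeds
when an independent `Beta(s+1, j−s+1)` sample exceeds `y`; i.e. `E[X(j,s,y) | s]`
for the geometric variable `X(j,s,y)` with success probability `1 − F^beta_{s+1,j−s+1}(y)`. -/
noncomputable def geomExp (j s : ℕ) (y : ℝ) : ℝ :=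
  ∑' k : ℕ, (k : ℝ) * (betaCDF (s + 1) (j - s + 1) y) ^ k * (1 - betaCDF (s + 1) (j - s + 1) y)

/-!
By the beta–binomial identity, `F := F^beta_{s+1, j-s+1}(y)` is the upper tail
`P(Bin(j+1, y) ≥ s+1)`, and `E[X(j,s,y) | s] = F / (1 - F)`. Split on whether `s` lies above the
midpoint `(y + μ₁) j / 2`. Above it, Hoeffding's inequality for `Bin(j+1, y)` gives `F ≤ 1/T²`,
hence `E[X | s] ≤ 2/T²`; below it, Hoeffding's inequality for `Bin(j, μ₁)` bounds the probability
of that event by `1/T²`, and there `min {·, T} ≤ T` contributes at most `1/T`. For `T ≤ 4` the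
trivial bound `T ≤ 16/T` suffices.
-/

open Finset

lemma binPMF_nonneg {p : ℝ} (hp₀ : 0 ≤ p) (hp₁ : p ≤ 1) (n k : ℕ) :
    0 ≤ binPMF n p k := by
  have := sub_nonneg.2 hp₁
  unfold binPMF
  positivity

lemma binPMF_eq_eval_bernsteinPolynomial (n : ℕ) (p : ℝ) (k : ℕ) :
    binPMF n p k = (bernsteinPolynomial ℝ n k).eval p := by
  simp [binPMF, bernsteinPolynomial]

lemma sum_binPMF_mul_exp (n : ℕ) (p t : ℝ) :
    ∑ k ∈ range (n + 1), binPMF n p k * exp (t * k) = (1 - p + p * exp t) ^ n := by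
  rw [add_comm (1 - p), add_pow]
  refine sum_congr rfl fun k _ => ?_
  rw [binPMF, mul_comm t, exp_nat_mul]
  ring

lemma sum_binPMF (n : ℕ) (p : ℝ) : ∑ k ∈ range (n + 1), binPMF n p k = 1 := by
  simpa using sum_binPMF_mul_exp n p 0

open ProbabilityTheory in
lemma one_sub_add_mul_exp_le {p : ℝ} (hp₀ : 0 ≤ p) (hp₁ : p ≤ 1) (t : ℝ) :
    1 - p + p * exp t ≤ exp (p * t + t ^ 2 / 8) := by
  let μ : Measure Bool := bernoulliMeasure true false ⟨p, hp₀, hp₁⟩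
  let X : Bool → ℝ := fun b => if b then 1 else 0
  have hmean : μ[X] = p := by simp [μ, X, integral_bernoulliMeasure]
  have hmgf : mgf X μ t = 1 - p + p * exp t := by
    simp only [mgf, μ, X, mul_ite, mul_one, mul_zero, integral_bernoulliMeasure, ↓reduceIte,
      smul_eq_mul, Bool.false_eq_true, exp_zero]
    ring
  have hoeffding := (hasSubgaussianMGF_of_mem_Icc (μ := μ) (a := 0) (b := 1)
    (measurable_of_finite X).aemeasurable (ae_of_all _ fun b => by cases b <;> simp [X])).mgf_le t
  simp only [sub_eq_add_neg, mgf_add_const, hmgf, hmean] at hoeffding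
  norm_num at hoeffding
  rw [show (1 : ℝ) / 4 * t ^ 2 / 2 = t ^ 2 / 8 by ring, ← sub_eq_add_neg] at hoeffding
  calc 1 - p + p * exp t = (1 - p + p * exp t) * exp (-(t * p)) * exp (p * t) := by
        rw [mul_assoc, ← exp_add, show -(t * p) + p * t = 0 by ring, exp_zero, mul_one]
    _ ≤ exp (t ^ 2 / 8) * exp (p * t) := by gcongr
    _ = exp (p * t + t ^ 2 / 8) := by rw [← exp_add, add_comm]

/-- Hoeffding's inequality for `Bin(n, p)`; the sign condition covers both the upper tail
(`p n ≤ c ≤ k`) and the lower tail (`k ≤ c ≤ p n`). -/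
lemma sum_binPMF_le_exp_neg_sq {n : ℕ} (hn : 0 < n) {p : ℝ} (hp₀ : 0 ≤ p) (hp₁ : p ≤ 1)
    {s : Finset ℕ} (hs : s ⊆ range (n + 1)) {c : ℝ}
    (hsign : ∀ k ∈ s, 0 ≤ (c - p * n) * (k - c)) :
    ∑ k ∈ s, binPMF n p k ≤ exp (-2 * (c - p * n) ^ 2 / n) := by
  have hn' : (0 : ℝ) < n := by exact_mod_cast hn
  -- the Chernoff parameter minimising `-t c + n (p t + t² / 8)`
  set t := 4 * (c - p * n) / n with ht
  calc ∑ k ∈ s, binPMF n p k ≤ ∑ k ∈ s, binPMF n p k * exp (t * (k - c)) := by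
        gcongr with k hk
        refine le_mul_of_one_le_right (binPMF_nonneg hp₀ hp₁ n k) (one_le_exp ?_)
        rw [ht, div_mul_eq_mul_div, mul_assoc]
        exact div_nonneg (mul_nonneg zero_le_four (hsign k hk)) hn'.le
    _ ≤ ∑ k ∈ range (n + 1), binPMF n p k * exp (t * (k - c)) :=
        sum_le_sum_of_subset_of_nonneg hs fun k _ _ =>
          mul_nonneg (binPMF_nonneg hp₀ hp₁ n k) (exp_pos _).le
    _ = exp (-(t * c)) * (1 - p + p * exp t) ^ n := by
        rw [← sum_binPMF_mul_exp, mul_sum]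
        refine sum_congr rfl fun k _ => ?_
        rw [mul_sub, sub_eq_neg_add, exp_add]
        ring
    _ ≤ exp (-(t * c)) * exp (p * t + t ^ 2 / 8) ^ n := by
        have := sub_nonneg.2 hp₁
        gcongr
        exact one_sub_add_mul_exp_le hp₀ hp₁ t
    _ = exp (-2 * (c - p * n) ^ 2 / n) := by
        rw [← exp_nat_mul, ← exp_add, ht]
        congr 1
        field_simp
        ring

lemma exp_neg_two_mul_sq_div_le_inv_sq {n : ℕ} (hn : 0 < n) {T Δ d : ℝ} (hT : 0 < T)
    (hΔ : 0 < Δ) (hnT : 4 * log T / Δ ^ 2 ≤ n) (hd : Δ * n / 2 ≤ |d|) :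
    exp (-2 * d ^ 2 / n) ≤ 1 / T ^ 2 := by
  have hn' : (0 : ℝ) < n := by exact_mod_cast hn
  rw [div_le_iff₀ (by positivity)] at hnT
  have hsq : (Δ * n / 2) ^ 2 ≤ d ^ 2 := by
    rw [← sq_abs d]
    exact pow_le_pow_left₀ (by positivity) hd 2
  have hexponent : 2 * log T ≤ 2 * d ^ 2 / n := by
    rw [le_div_iff₀ hn']
    nlinarith
  calc exp (-2 * d ^ 2 / n) ≤ exp (-(2 * log T)) := by
        rw [exp_le_exp, neg_mul, neg_div]
        exact neg_le_neg hexponent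
    _ = 1 / T ^ 2 := by
        rw [show 2 * log T = log (T ^ 2) by rw [log_pow]; norm_num, exp_neg,
          exp_log (by positivity), one_div]

lemma derivative_sum_bernsteinPolynomial_Icc {R : Type*} [CommRing R] (a b : ℕ) :
    Polynomial.derivative (∑ k ∈ Icc (a + 1) (a + b + 1), bernsteinPolynomial R (a + b + 1) k) =
      ((a + b + 1 : ℕ) : Polynomial R) * bernsteinPolynomial R (a + b) a := by
  rw [← Ico_add_one_right_eq_Icc, ← sum_Ico_add' (c := 1), map_sum]
  simp_rw [bernsteinPolynomial.derivative_succ, ← mul_sum]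
  congr 1
  simp only [Nat.add_sub_cancel]
  have htelescope := Finset.sum_Ico_sub (f := bernsteinPolynomial R (a + b))
    (show a ≤ a + b + 1 by omega)
  rw [bernsteinPolynomial.eq_zero_of_lt R (by omega : a + b < a + b + 1)] at htelescope
  rw [sum_sub_distrib] at htelescope ⊢
  linear_combination -htelescope

lemma hasDerivAt_sum_binPMF_Icc (a b : ℕ) (x : ℝ) :
    HasDerivAt (fun x => ∑ k ∈ Icc (a + 1) (a + b + 1), binPMF (a + b + 1) x k)
      ((a + b + 1) * binPMF (a + b) x a) x := by
  simp only [binPMF_eq_eval_bernsteinPolynomial, ← Polynomial.eval_finsetSum]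
  refine (Polynomial.hasDerivAt _ x).congr_deriv ?_
  rw [derivative_sum_bernsteinPolynomial_Icc]
  simp

lemma betaPDF_succ_succ (a b : ℕ) {x : ℝ} (hx₀ : 0 < x) (hx₁ : x < 1) :
    betaPDF (a + 1) (b + 1) x = (a + b + 1) * binPMF (a + b) x a := by
  have hfact : ((a + b + 1).factorial : ℝ) / (a.factorial * b.factorial) =
      (a + b + 1) * (a + b).choose a := by
    rw [div_eq_iff (by positivity), Nat.factorial_succ,
      ← Nat.choose_mul_factorial_mul_factorial (Nat.le_add_right a b), Nat.add_sub_cancel_left]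
    push_cast
    ring
  simp only [betaPDF, if_pos (And.intro hx₀ hx₁), binPMF, Nat.add_sub_cancel,
    Nat.add_sub_cancel_left]
  push_cast
  rw [show (a : ℝ) + 1 + (b + 1) = (a + b + 1 : ℕ) + 1 by push_cast; ring,
    Real.Gamma_nat_eq_factorial, Real.Gamma_nat_eq_factorial, Real.Gamma_nat_eq_factorial, hfact]
  ring

lemma betaPDF_of_nonpos (a b : ℕ) {x : ℝ} (hx : x ≤ 0) : betaPDF a b x = 0 :=
  if_neg fun h => hx.not_gt h.1

lemma betaPDF_nonneg (a b : ℕ) (x : ℝ) : 0 ≤ betaPDF a b x := by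
  unfold betaPDF
  split_ifs with hx
  · have := hx.1
    have := sub_pos.2 hx.2
    positivity
  · exact le_rfl

lemma betaCDF_nonneg (a b : ℕ) (y : ℝ) : 0 ≤ betaCDF a b y :=
  integral_nonneg (betaPDF_nonneg a b)

lemma betaCDF_succ_succ_eq_sum_binPMF (a b : ℕ) {y : ℝ} (hy₀ : 0 ≤ y) (hy₁ : y ≤ 1) :
    betaCDF (a + 1) (b + 1) y = ∑ k ∈ Icc (a + 1) (a + b + 1), binPMF (a + b + 1) y k := by
  have htail_zero : ∑ k ∈ Icc (a + 1) (a + b + 1), binPMF (a + b + 1) 0 k = 0 :=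
    sum_eq_zero fun k hk => by simp [binPMF, (by grind : k ≠ 0)]
  calc betaCDF (a + 1) (b + 1) y = ∫ x in Set.Ioo 0 y, betaPDF (a + 1) (b + 1) x := by
        rw [betaCDF, setIntegral_eq_of_subset_of_forall_sdiff_eq_zero measurableSet_Iic
          Set.Ioc_subset_Iic_self, integral_Ioc_eq_integral_Ioo]
        intro x hx
        exact betaPDF_of_nonpos _ _ (by grind)
    _ = ∫ x in Set.Ioo 0 y, (a + b + 1) * binPMF (a + b) x a :=
        setIntegral_congr_fun measurableSet_Ioo fun x hx =>
          betaPDF_succ_succ a b hx.1 (hx.2.trans_le hy₁)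
    _ = ∫ x in 0..y, (a + b + 1) * binPMF (a + b) x a := by
        rw [intervalIntegral.integral_of_le hy₀, integral_Ioc_eq_integral_Ioo]
    _ = _ := by
        rw [intervalIntegral.integral_eq_sub_of_hasDerivAt
          (fun x _ => hasDerivAt_sum_binPMF_Icc a b x)
          (Continuous.intervalIntegrable (by unfold binPMF; fun_prop) _ _), htail_zero, sub_zero]

lemma geomExp_eq_div {j s : ℕ} {y : ℝ} (h₀ : 0 ≤ betaCDF (s + 1) (j - s + 1) y)
    (h₁ : betaCDF (s + 1) (j - s + 1) y < 1) :
    geomExp j s y = betaCDF (s + 1) (j - s + 1) y / (1 - betaCDF (s + 1) (j - s + 1) y) := by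
  have : 1 - betaCDF (s + 1) (j - s + 1) y ≠ 0 := by linarith
  rw [geomExp, tsum_mul_right, tsum_coe_mul_geometric_of_norm_lt_one
    (by rwa [norm_of_nonneg h₀])]
  field_simp

lemma betaCDF_le_inv_sq_of_midpoint_le {y μ T : ℝ} (hy : 0 ≤ y) (hyμ : y < μ) (hμ : μ ≤ 1)
    (hT : 0 < T) {j s : ℕ} (hj : 4 * log T / (μ - y) ^ 2 ≤ j) (hsj : s ≤ j)
    (hs : (y + μ) / 2 * j ≤ s) :
    betaCDF (s + 1) (j - s + 1) y ≤ 1 / T ^ 2 := by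
  obtain ⟨b, rfl⟩ := Nat.exists_eq_add_of_le hsj
  push_cast at hj hs
  have hdev₀ : 0 ≤ (μ - y) * (s + b + 1) / 2 := by
    have := sub_pos.2 hyμ
    positivity
  -- `1 - y ≥ (μ - y) / 2` absorbs the shift from `Bin(j, ·)` to `Bin(j + 1, ·)`
  have hdev : (μ - y) * (s + b + 1) / 2 ≤ s + 1 - y * (s + b + 1) := by nlinarith
  rw [Nat.add_sub_cancel_left, betaCDF_succ_succ_eq_sum_binPMF s b hy (by linarith)]
  refine (sum_binPMF_le_exp_neg_sq (c := s + 1) (by omega) hy (by linarith)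
    (fun k hk => by grind) fun k hk => ?_).trans ?_
  · have : (s : ℝ) + 1 ≤ k := by exact_mod_cast (mem_Icc.1 hk).1
    push_cast
    exact mul_nonneg (hdev₀.trans hdev) (by linarith)
  · refine exp_neg_two_mul_sq_div_le_inv_sq (Δ := μ - y) (by omega) hT (by linarith) ?_ ?_
    · push_cast
      linarith
    · push_cast
      exact hdev.trans (le_abs_self _)

lemma sum_binPMF_lt_midpoint_le_inv_sq {y μ T : ℝ} (hyμ : y < μ) (hμ₀ : 0 ≤ μ) (hμ₁ : μ ≤ 1)
    (hT : 1 < T) {j : ℕ} (hj : 4 * log T / (μ - y) ^ 2 ≤ j) :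
    ∑ s ∈ range (j + 1) with ((s : ℕ) : ℝ) < (y + μ) / 2 * j, binPMF j μ s ≤ 1 / T ^ 2 := by
  have hΔ := sub_pos.2 hyμ
  have hj₀ : 0 < j := by
    have : 0 < 4 * log T / (μ - y) ^ 2 := by
      have := log_pos hT
      positivity
    exact_mod_cast this.trans_le hj
  have hdev : (y + μ) / 2 * j - μ * j = -((μ - y) * j / 2) := by ring
  refine (sum_binPMF_le_exp_neg_sq (c := (y + μ) / 2 * j) hj₀ hμ₀ hμ₁ (filter_subset _ _)
    fun k hk => ?_).trans ?_
  · have := (mem_filter.1 hk).2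
    rw [hdev]
    exact mul_nonneg_of_nonpos_of_nonpos (neg_nonpos.2 (by positivity)) (by linarith)
  · refine exp_neg_two_mul_sq_div_le_inv_sq hj₀ (by linarith) hΔ hj ?_
    rw [hdev, abs_neg, abs_of_nonneg (by positivity)]

lemma sum_mul_le_add_sum_filter_mul {ι : Type*} {s : Finset ι} {w f : ι → ℝ}
    (P : ι → Prop) [DecidablePred P] {B M : ℝ} (hw : ∀ i ∈ s, 0 ≤ w i)
    (hw₁ : ∑ i ∈ s, w i ≤ 1) (hB : 0 ≤ B) (hgood : ∀ i ∈ s, ¬ P i → f i ≤ B)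
    (hbad : ∀ i ∈ s, P i → f i ≤ M) :
    ∑ i ∈ s, w i * f i ≤ B + (∑ i ∈ s with P i, w i) * M := by
  rw [← sum_filter_not_add_sum_filter s P, sum_mul]
  refine add_le_add ?_ (sum_le_sum fun i hi => ?_)
  · calc ∑ i ∈ s with ¬ P i, w i * f i ≤ (∑ i ∈ s with ¬ P i, w i) * B := by
          rw [sum_mul]
          refine sum_le_sum fun i hi => ?_
          rw [mem_filter] at hi
          exact mul_le_mul_of_nonneg_left (hgood i hi.1 hi.2) (hw i hi.1)
      _ ≤ 1 * B := by
          gcongr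
          exact (sum_le_sum_of_subset_of_nonneg (filter_subset _ _) fun i hi _ => hw i hi).trans
            hw₁
      _ = B := one_mul B
  · rw [mem_filter] at hi
    exact mul_le_mul_of_nonneg_left (hbad i hi.1 hi.2) (hw i hi.1)

lemma geomExp_le_two_div_sq_of_midpoint_le {y μ T : ℝ} (hy : 0 ≤ y) (hyμ : y < μ) (hμ : μ ≤ 1)
    (hT : 2 ≤ T) {j s : ℕ} (hj : 4 * log T / (μ - y) ^ 2 ≤ j) (hsj : s ≤ j)
    (hs : (y + μ) / 2 * j ≤ s) :
    geomExp j s y ≤ 2 / T ^ 2 := by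
  set F := betaCDF (s + 1) (j - s + 1) y
  have hF : F ≤ 1 / T ^ 2 :=
    betaCDF_le_inv_sq_of_midpoint_le hy hyμ hμ (by linarith) hj hsj hs
  have hF_half : F ≤ 1 / 2 :=
    hF.trans (by rw [div_le_div_iff₀ (by positivity) two_pos]; nlinarith)
  rw [geomExp_eq_div (betaCDF_nonneg _ _ _) (by linarith), div_le_iff₀ (by linarith)]
  calc F ≤ 1 / T ^ 2 := hF
    _ ≤ 1 / T ^ 2 * (2 * (1 - F)) := le_mul_of_one_le_right (by positivity) (by linarith)
    _ = 2 / T ^ 2 * (1 - F) := by ring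

/-- for `0 < y < μ₁ ≤ 1`, `Δ' = μ₁ − y`, `T ≥ 1` and any
`j ≥ 4 (ln T)/Δ'²`, taking `s(j) ~ Binomial(j, μ₁)`,
`E[ min{ E[X(j,s(j),y) | s(j)], T } ] ≤ 16/T`. -/
theorem large_j_bound (y μ₁ Δ' : ℝ) (hy : 0 < y) (hyμ : y < μ₁) (hμ : μ₁ ≤ 1)
    (hΔ : Δ' = μ₁ - y) (T : ℕ) (hT : 1 ≤ T) (j : ℕ)
    (hj : (j : ℝ) ≥ 4 * Real.log T / Δ' ^ 2) :
    ∑ s ∈ Finset.range (j + 1), binPMF j μ₁ s * min (geomExp j s y) (T : ℝ) ≤ 16 / T := by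
  subst hΔ
  have hT₀ : (0 : ℝ) < T := by exact_mod_cast hT
  have hw : ∀ s ∈ range (j + 1), 0 ≤ binPMF j μ₁ s :=
    fun s _ => binPMF_nonneg (hy.trans hyμ).le hμ j s
  rcases le_or_gt (T : ℝ) 4 with hT₄ | hT₄
  · calc _ ≤ ∑ s ∈ range (j + 1), binPMF j μ₁ s * T := by
          gcongr with s hs
          exacts [hw s hs, min_le_right _ _]
      _ = T := by rw [← sum_mul, sum_binPMF, one_mul]
      _ ≤ 16 / T := by
          rw [le_div_iff₀ hT₀]
          nlinarith
  calc _ ≤ 2 / T ^ 2 +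
        (∑ s ∈ range (j + 1) with ((s : ℕ) : ℝ) < (y + μ₁) / 2 * j, binPMF j μ₁ s) * T :=
        sum_mul_le_add_sum_filter_mul _ hw (sum_binPMF j μ₁).le (by positivity)
          (fun s hs hmid => (min_le_left _ _).trans <| geomExp_le_two_div_sq_of_midpoint_le
            hy.le hyμ hμ (by linarith) hj (by grind) (not_lt.1 hmid))
          fun _ _ _ => min_le_right _ _
    _ ≤ 2 / T ^ 2 + 1 / T ^ 2 * T := by
        gcongr
        exact sum_binPMF_lt_midpoint_le_inv_sq hyμ (hy.trans hyμ).le hμ (by linarith) hj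
    _ ≤ 16 / T := by
        field_simp
        nlinarith
end
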